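/- arXiv:2306.07418 — 2 statements merged into one kernel-verified Lean document; each statement's English description precedes it below -/
import Mathlib

section
/- Let M be the subsystem measurement on C^E ⊗ C^D, let Θ(M)(ρ) = Σ_{j∈Z_D} M_j(ρ) ⊗ |j⟩⟨j| be an implementation of M with completely positive maps M_j whose sum is trace preserving, and let Δ = Θ(M) − M. Then for every density matrix σ on C^E and every j ∈ Z_D, with σ_j = σ ⊗ |j⟩⟨j|, the diamond norm satisfies ‖Δ‖_◇ ≥ 1 − tr M_j(σ_j) + ‖M_j(σ_j) − σ_j‖₁. -/
open scoped Kronecker ComplexOrder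
open Matrix

/-- The positive semidefinite square root of a positive semidefinite matrix
(junk value `0` on matrices that are not positive semidefinite). -/
noncomputable def psdSqrt {n : Type*} [Fintype n] [DecidableEq n] (A : Matrix n n ℂ) :
    Matrix n n ℂ :=
  letI := Classical.propDecidable A.PosSemidef
  if h : A.PosSemidef then (h.1.eigenvectorUnitary : Matrix n n ℂ) *
    diagonal ((↑) ∘ (√·) ∘ h.1.eigenvalues) * (star h.1.eigenvectorUnitary : Matrix n n ℂ) else 0

/-- The trace norm `‖A‖₁ = tr √(A Aᴴ)`. -/
noncomputable def traceNorm {n : Type*} [Fintype n] [DecidableEq n] (A : Matrix n n ℂ) : ℝ :=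
  (psdSqrt (A * Aᴴ)).trace.re

/-- The fidelity `F(A,B) = ‖√A √B‖₁²` between positive semidefinite matrices. -/
noncomputable def fidelity {n : Type*} [Fintype n] [DecidableEq n] (A B : Matrix n n ℂ) : ℝ :=
  traceNorm (psdSqrt A * psdSqrt B) ^ 2

/-- The Choi matrix `J(Φ) = (1/n) Σ_{j,k} E_{jk} ⊗ Φ(E_{jk})` of a map on matrices. -/
noncomputable def choi {n m : Type*} [Fintype n] [DecidableEq n] [Fintype m]
    (Φ : Matrix n n ℂ → Matrix m m ℂ) : Matrix (n × m) (n × m) ℂ :=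
  (Fintype.card n : ℂ)⁻¹ • ∑ j : n, ∑ k : n,
    (Matrix.single j k (1 : ℂ)) ⊗ₖ Φ (Matrix.single j k (1 : ℂ))

/-- The extension `(id_F ⊗ Φ)` of a map on matrices by an ancilla of dimension `F`. -/
def tensorExt (F : ℕ) {n m : Type*} (Φ : Matrix n n ℂ → Matrix m m ℂ)
    (ρ : Matrix (Fin F × n) (Fin F × n) ℂ) : Matrix (Fin F × m) (Fin F × m) ℂ :=
  Matrix.of fun p q => Φ (Matrix.of fun i j => ρ (p.1, i) (q.1, j)) p.2 q.2

/-- The diamond norm `‖Φ‖◇`: the supremum of `‖(id_F ⊗ Φ)(ρ)‖₁` over all finite ancilla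
dimensions `F` and density matrices `ρ`. -/
noncomputable def diamondNorm {n m : Type*} [Fintype n] [DecidableEq n] [Fintype m]
    [DecidableEq m] (Φ : Matrix n n ℂ → Matrix m m ℂ) : ℝ :=
  sSup { x : ℝ | ∃ (F : ℕ) (ρ : Matrix (Fin F × n) (Fin F × n) ℂ),
    ρ.PosSemidef ∧ ρ.trace = 1 ∧ x = traceNorm (tensorExt F Φ ρ) }

/-- `|j⟩⟨j|` as a `D × D` matrix over the cyclic outcome set `Z_D`. -/
def ketbra {D : ℕ} [NeZero D] (j : ZMod D) : Matrix (ZMod D) (ZMod D) ℂ :=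
  Matrix.single j j 1

/-- The projector `π_j = I_E ⊗ |j⟩⟨j|`. -/
def measProj (E : ℕ) {D : ℕ} [NeZero D] (j : ZMod D) :
    Matrix (Fin E × ZMod D) (Fin E × ZMod D) ℂ :=
  (1 : Matrix (Fin E) (Fin E) ℂ) ⊗ₖ ketbra j

/-- The subsystem measurement `M(ρ) = Σ_j π_j ρ π_j ⊗ |j⟩⟨j|`. -/
noncomputable def subsysMeas (E D : ℕ) [NeZero D]
    (ρ : Matrix (Fin E × ZMod D) (Fin E × ZMod D) ℂ) :
    Matrix ((Fin E × ZMod D) × ZMod D) ((Fin E × ZMod D) × ZMod D) ℂ :=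
  ∑ j : ZMod D, (measProj E j * ρ * measProj E j) ⊗ₖ ketbra j

/-- The block `(I_E ⊗ ⟨x|) ρ (I_E ⊗ |y⟩)` of a matrix on `C^E ⊗ C^D`. -/
def blockAt {E D : ℕ} [NeZero D] (ρ : Matrix (Fin E × ZMod D) (Fin E × ZMod D) ℂ)
    (x y : ZMod D) : Matrix (Fin E) (Fin E) ℂ :=
  Matrix.of fun e f => ρ (e, x) (f, y)

/-- `col(I_E)`: the column-stacking vectorization of the identity matrix, as a vector indexed
compatibly with the Choi matrix `choi` of a map on `E × E` matrices. -/
def colI (E : ℕ) : Fin E × Fin E → ℂ := fun p => if p.1 = p.2 then 1 else 0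

/-- `T` is a (normalized) stochastic channel with parameter `λ ∈ [0,1]`: it has a Kraus
decomposition `T(ρ) = Σ_k B_k ρ B_kᴴ` with pairwise Hilbert–Schmidt orthogonal Kraus
operators, `Σ_k B_kᴴ B_k = 1` (trace preservation), and `B_0 = √λ • I`. -/
def IsStochasticKraus {n : Type*} [Fintype n] [DecidableEq n] (lam : ℝ)
    (T : Matrix n n ℂ → Matrix n n ℂ) : Prop :=
  ∃ (K : ℕ) (B : Fin (K + 1) → Matrix n n ℂ),
    (∀ ρ, T ρ = ∑ k, B k * ρ * (B k)ᴴ) ∧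
    (∑ k, (B k)ᴴ * B k = 1) ∧
    (∀ k l, k ≠ l → ((B k)ᴴ * B l).trace = 0) ∧
    B 0 = (Real.sqrt lam : ℂ) • 1

/-! Feed `Δ` the state `σ_j = σ ⊗ |j⟩⟨j|` with a trivial ancilla. The measurement returns
`σ_j ⊗ |j⟩⟨j|`, so `Δ(σ_j)` is block diagonal with blocks `M_k(σ_j)` for `k ≠ j` and
`M_j(σ_j) - σ_j` for `k = j`. The trace norm of a block-diagonal matrix is the sum of the trace
norms of its blocks; the positive blocks contribute `Σ_{k ≠ j} tr M_k(σ_j) = 1 - tr M_j(σ_j)` by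
trace preservation. This value lies below the diamond norm because the set under its `sSup` is
bounded: `id ⊗ Θ(M)` and `id ⊗ M` send states to states, and `‖P - Q‖₁ ≤ tr P + tr Q` for
positive `P`, `Q`. -/

open scoped MatrixOrder

section PsdSqrt

variable {n : Type*} [Fintype n] [DecidableEq n]

lemma psdSqrt_eq_cfcSqrt {A : Matrix n n ℂ} (hA : A.PosSemidef) : psdSqrt A = CFC.sqrt A := by
  rw [CFC.sqrt_eq_real_sqrt A hA.nonneg, cfcₙ_eq_cfc, hA.1.cfc_eq, IsHermitian.cfc, psdSqrt,
    dif_pos hA]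
  rfl

lemma psdSqrt_eq_of_sq_eq {A S : Matrix n n ℂ} (hS : S.PosSemidef) (h : S ^ 2 = A) :
    psdSqrt A = S := by
  rw [psdSqrt_eq_cfcSqrt (h ▸ hS.pow 2)]
  exact CFC.sqrt_unique (by rw [← pow_two, h]) hS.nonneg

lemma psdSqrt_posSemidef {A : Matrix n n ℂ} (hA : A.PosSemidef) : (psdSqrt A).PosSemidef := by
  rw [psdSqrt_eq_cfcSqrt hA]
  exact nonneg_iff_posSemidef.mp (CFC.sqrt_nonneg A)

lemma psdSqrt_sq {A : Matrix n n ℂ} (hA : A.PosSemidef) : psdSqrt A ^ 2 = A := by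
  rw [psdSqrt_eq_cfcSqrt hA]
  exact CFC.sq_sqrt A hA.nonneg

end PsdSqrt

lemma trace_submatrix_equiv {n m α : Type*} [Fintype n] [Fintype m] [AddCommMonoid α]
    (e : m ≃ n) (A : Matrix n n α) : (A.submatrix e e).trace = A.trace :=
  e.sum_comp fun i => A i i

lemma OrthonormalBasis.sum_star_dotProduct_mulVec {𝕜 n ι : Type*} [RCLike 𝕜] [Fintype n]
    [DecidableEq n] [Fintype ι] (b : OrthonormalBasis ι 𝕜 (EuclideanSpace 𝕜 n))
    (A : Matrix n n 𝕜) : ∑ i, star ⇑(b i) ⬝ᵥ A *ᵥ ⇑(b i) = A.trace := by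
  have htrace : LinearMap.trace 𝕜 _ (Matrix.toLpLin 2 2 A) = A.trace := by
    rw [LinearMap.trace_eq_matrix_trace 𝕜 (PiLp.basisFun 2 𝕜 n), Matrix.toLpLin_eq_toLin,
      LinearMap.toMatrix_toLin]
  rw [← htrace, LinearMap.trace_eq_sum_inner _ b]
  simp only [EuclideanSpace.inner_eq_star_dotProduct, Matrix.toLpLin_apply, dotProduct_comm]

section TraceNorm

variable {n : Type*} [Fintype n] [DecidableEq n]

lemma traceNorm_of_posSemidef {A : Matrix n n ℂ} (hA : A.PosSemidef) :
    traceNorm A = A.trace.re := by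
  rw [traceNorm, hA.1.eq, ← pow_two, psdSqrt_eq_of_sq_eq hA rfl]

lemma traceNorm_submatrix_equiv {m : Type*} [Fintype m] [DecidableEq m] (e : m ≃ n)
    (A : Matrix n n ℂ) : traceNorm (A.submatrix e e) = traceNorm A := by
  have hAA : (A * Aᴴ).PosSemidef := posSemidef_self_mul_conjTranspose A
  have hsqrt : psdSqrt ((A * Aᴴ).submatrix e e) = (psdSqrt (A * Aᴴ)).submatrix e e :=
    psdSqrt_eq_of_sq_eq ((psdSqrt_posSemidef hAA).submatrix e) <| by
      rw [pow_two, submatrix_mul_equiv, ← pow_two, psdSqrt_sq hAA]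
  rw [traceNorm, conjTranspose_submatrix, submatrix_mul_equiv, hsqrt, trace_submatrix_equiv,
    traceNorm]

lemma traceNorm_eq_sum_abs_eigenvalues {X : Matrix n n ℂ} (hX : X.IsHermitian) :
    traceNorm X = ∑ i, |hX.eigenvalues i| := by
  have habs : psdSqrt (X * Xᴴ) = cfc (fun x : ℝ => |x|) X := by
    refine psdSqrt_eq_of_sq_eq (nonneg_iff_posSemidef.mp (cfc_nonneg fun x _ => abs_nonneg x)) ?_
    rw [hX.eq, pow_two, ← cfc_mul (fun x : ℝ => |x|) (fun x : ℝ => |x|) X]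
    simp only [abs_mul_abs_self]
    rw [cfc_mul (fun x : ℝ => x) (fun x : ℝ => x) X, cfc_id' ℝ X]
  rw [traceNorm, habs, hX.cfc_eq, IsHermitian.cfc, Unitary.conjStarAlgAut_apply, trace_mul_cycle,
    Unitary.coe_star_mul_self, one_mul, trace_diagonal, Complex.re_sum]
  simp

lemma traceNorm_sub_le {P Q : Matrix n n ℂ} (hP : P.PosSemidef) (hQ : Q.PosSemidef) :
    traceNorm (P - Q) ≤ P.trace.re + Q.trace.re := by
  have hX := hP.1.sub hQ.1
  set u := hX.eigenvectorBasis
  rw [traceNorm_eq_sum_abs_eigenvalues hX, ← u.sum_star_dotProduct_mulVec P,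
    ← u.sum_star_dotProduct_mulVec Q, Complex.re_sum, Complex.re_sum, ← Finset.sum_add_distrib]
  gcongr with i
  have hP' := hP.re_dotProduct_nonneg (u i)
  have hQ' := hQ.re_dotProduct_nonneg (u i)
  rw [hX.eigenvalues_eq, sub_mulVec, dotProduct_sub, map_sub, abs_sub_le_iff]
  constructor <;> simp only [RCLike.re_to_complex] at * <;> linarith

end TraceNorm

lemma sum_kronecker_single {n o α : Type*} [Fintype o] [DecidableEq o] [NonAssocSemiring α]
    (A : o → Matrix n n α) :
    ∑ k, A k ⊗ₖ single k k (1 : α) = blockDiagonal A := by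
  ext ⟨a, x⟩ ⟨b, y⟩
  simp [Matrix.sum_apply, blockDiagonal_apply, single_apply, ite_and]

section BlockDiagonal

variable {n o : Type*} [Fintype n] [DecidableEq n] [Fintype o] [DecidableEq o]

lemma posSemidef_blockDiagonal {A : o → Matrix n n ℂ} (hA : ∀ k, (A k).PosSemidef) :
    (blockDiagonal A).PosSemidef := by
  choose C hC using fun k => CStarAlgebra.nonneg_iff_eq_star_mul_self.mp (hA k).nonneg
  have hfactor : blockDiagonal A = (blockDiagonal C)ᴴ * blockDiagonal C := by
    rw [blockDiagonal_conjTranspose, ← blockDiagonal_mul]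
    exact congrArg _ (funext hC)
  exact hfactor ▸ posSemidef_conjTranspose_mul_self _

lemma psdSqrt_blockDiagonal {A : o → Matrix n n ℂ} (hA : ∀ k, (A k).PosSemidef) :
    psdSqrt (blockDiagonal A) = blockDiagonal fun k => psdSqrt (A k) :=
  psdSqrt_eq_of_sq_eq (posSemidef_blockDiagonal fun k => psdSqrt_posSemidef (hA k)) <| by
    rw [← blockDiagonal_pow]
    exact congrArg _ (funext fun k => psdSqrt_sq (hA k))

lemma traceNorm_blockDiagonal (A : o → Matrix n n ℂ) :
    traceNorm (blockDiagonal A) = ∑ k, traceNorm (A k) := by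
  rw [traceNorm, blockDiagonal_conjTranspose, ← blockDiagonal_mul,
    psdSqrt_blockDiagonal fun k => posSemidef_self_mul_conjTranspose (A k), trace_blockDiagonal,
    Complex.re_sum]
  rfl

lemma traceNorm_blockDiagonal_sub_single {P : o → Matrix n n ℂ} (hP : ∀ k, (P k).PosSemidef)
    (j : o) (X : Matrix n n ℂ) :
    traceNorm (blockDiagonal (P - Pi.single j X))
      = ∑ k, (P k).trace.re - (P j).trace.re + traceNorm (P j - X) := by
  rw [traceNorm_blockDiagonal, Fintype.sum_eq_add_sum_compl j, Fintype.sum_eq_add_sum_compl j]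
  have hoff : ∀ k ∈ ({j}ᶜ : Finset o),
      traceNorm ((P - Pi.single j X : o → Matrix n n ℂ) k) = (P k).trace.re := by
    intro k hk
    rw [Pi.sub_apply, Pi.single_eq_of_ne (Finset.mem_compl.mp hk ∘ Finset.mem_singleton.mpr),
      sub_zero, traceNorm_of_posSemidef (hP k)]
  rw [Finset.sum_congr rfl hoff, Pi.sub_apply, Pi.single_eq_same]
  ring

end BlockDiagonal

section TensorExt

variable {F : ℕ} {n m : Type*}

lemma tensorExt_conj [Fintype n] (A : Matrix m n ℂ) (ρ : Matrix (Fin F × n) (Fin F × n) ℂ) :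
    tensorExt F (fun X => A * X * Aᴴ) ρ
      = ((1 : Matrix (Fin F) (Fin F) ℂ) ⊗ₖ A) * ρ * ((1 : Matrix (Fin F) (Fin F) ℂ) ⊗ₖ A)ᴴ := by
  ext ⟨f, a⟩ ⟨g, b⟩
  simp [tensorExt, Matrix.mul_apply, Fintype.sum_prod_type, one_apply, Finset.sum_mul, apply_ite,
    Finset.sum_ite_eq]

lemma tensorExt_sum {ι : Type*} (s : Finset ι) (Φ : ι → Matrix n n ℂ → Matrix m m ℂ)
    (ρ : Matrix (Fin F × n) (Fin F × n) ℂ) :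
    tensorExt F (fun X => ∑ i ∈ s, Φ i X) ρ = ∑ i ∈ s, tensorExt F (Φ i) ρ := by
  ext p q
  simp [tensorExt, Matrix.sum_apply]

lemma tensorExt_sub (Φ Ψ : Matrix n n ℂ → Matrix m m ℂ) (ρ : Matrix (Fin F × n) (Fin F × n) ℂ) :
    tensorExt F (fun X => Φ X - Ψ X) ρ = tensorExt F Φ ρ - tensorExt F Ψ ρ := by
  ext p q
  simp [tensorExt]

lemma tensorExt_kronecker {l : Type*} (Φ : Matrix n n ℂ → Matrix m m ℂ) (P : Matrix l l ℂ)
    (ρ : Matrix (Fin F × n) (Fin F × n) ℂ) :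
    tensorExt F (fun X => Φ X ⊗ₖ P) ρ
      = (tensorExt F Φ ρ ⊗ₖ P).submatrix (Equiv.prodAssoc _ _ _).symm
          (Equiv.prodAssoc _ _ _).symm :=
  rfl

lemma trace_tensorExt [Fintype n] [Fintype m] {Φ : Matrix n n ℂ → Matrix m m ℂ}
    (hΦ : ∀ X, (Φ X).trace = X.trace) (ρ : Matrix (Fin F × n) (Fin F × n) ℂ) :
    (tensorExt F Φ ρ).trace = ρ.trace := by
  simp only [trace, diag, tensorExt, of_apply, Fintype.sum_prod_type]
  exact Finset.sum_congr rfl fun f _ => hΦ _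

lemma tensorExt_one_submatrix (Φ : Matrix n n ℂ → Matrix m m ℂ) (ρ : Matrix n n ℂ) :
    tensorExt 1 Φ (ρ.submatrix (Equiv.uniqueProd n (Fin 1)) (Equiv.uniqueProd n (Fin 1)))
      = (Φ ρ).submatrix (Equiv.uniqueProd m (Fin 1)) (Equiv.uniqueProd m (Fin 1)) :=
  rfl

end TensorExt

def IsCompletelyPositive {n m : Type*} [Fintype m] (Φ : Matrix n n ℂ → Matrix m m ℂ) : Prop :=
  ∀ (F : ℕ) (ρ : Matrix (Fin F × n) (Fin F × n) ℂ), ρ.PosSemidef → (tensorExt F Φ ρ).PosSemidef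

namespace IsCompletelyPositive

variable {n m : Type*} [Fintype m]

lemma conj [Fintype n] (A : Matrix m n ℂ) :
    IsCompletelyPositive fun X : Matrix n n ℂ => A * X * Aᴴ := fun F ρ hρ => by
  rw [tensorExt_conj]
  exact hρ.mul_mul_conjTranspose_same _

lemma sum {ι : Type*} (s : Finset ι) {Φ : ι → Matrix n n ℂ → Matrix m m ℂ}
    (hΦ : ∀ i ∈ s, IsCompletelyPositive (Φ i)) :
    IsCompletelyPositive fun X => ∑ i ∈ s, Φ i X := fun F ρ hρ => by
  rw [tensorExt_sum]
  exact posSemidef_sum s fun i hi => hΦ i hi F ρ hρ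

lemma of_kraus [Fintype n] {ι : Type*} [Fintype ι]
    {Φ : Matrix n n ℂ → Matrix m m ℂ} (R : ι → Matrix m n ℂ)
    (hΦ : ∀ X, Φ X = ∑ i, R i * X * (R i)ᴴ) : IsCompletelyPositive Φ := by
  rw [funext hΦ]
  exact sum _ fun i _ => conj (R i)

lemma kronecker {l : Type*} [Fintype l] {Φ : Matrix n n ℂ → Matrix m m ℂ}
    (hΦ : IsCompletelyPositive Φ) {P : Matrix l l ℂ} (hP : P.PosSemidef) :
    IsCompletelyPositive fun X => Φ X ⊗ₖ P := fun F ρ hρ => by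
  rw [tensorExt_kronecker]
  exact ((hΦ F ρ hρ).kronecker hP).submatrix _

lemma posSemidef {Φ : Matrix n n ℂ → Matrix m m ℂ} (hΦ : IsCompletelyPositive Φ)
    {ρ : Matrix n n ℂ} (hρ : ρ.PosSemidef) : (Φ ρ).PosSemidef := by
  have h := hΦ 1 _ (hρ.submatrix (Equiv.uniqueProd n (Fin 1)))
  rw [tensorExt_one_submatrix] at h
  exact h.submatrix (Equiv.uniqueProd m (Fin 1)).symm

end IsCompletelyPositive

section DiamondNorm

variable {n m : Type*} [Fintype n] [Fintype m] [DecidableEq m]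

lemma traceNorm_le_diamondNorm [DecidableEq n] {Φ : Matrix n n ℂ → Matrix m m ℂ} {C : ℝ}
    (hC : ∀ (F : ℕ) (ρ : Matrix (Fin F × n) (Fin F × n) ℂ),
      ρ.PosSemidef → ρ.trace = 1 → traceNorm (tensorExt F Φ ρ) ≤ C)
    {ρ : Matrix n n ℂ} (hρ : ρ.PosSemidef) (hρtr : ρ.trace = 1) :
    traceNorm (Φ ρ) ≤ diamondNorm Φ := by
  set e := Equiv.uniqueProd n (Fin 1)
  refine le_csSup ⟨C, ?_⟩ ⟨1, ρ.submatrix e e, hρ.submatrix e, ?_, ?_⟩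
  · rintro x ⟨F, σ, hσ, hσtr, rfl⟩
    exact hC F σ hσ hσtr
  · rwa [trace_submatrix_equiv]
  · rw [tensorExt_one_submatrix, traceNorm_submatrix_equiv]

lemma traceNorm_tensorExt_sub_le_two {Φ Ψ : Matrix n n ℂ → Matrix m m ℂ}
    (hΦ : IsCompletelyPositive Φ) (hΦtr : ∀ X, (Φ X).trace = X.trace)
    (hΨ : IsCompletelyPositive Ψ) (hΨtr : ∀ X, (Ψ X).trace = X.trace)
    {F : ℕ} {ρ : Matrix (Fin F × n) (Fin F × n) ℂ} (hρ : ρ.PosSemidef) (hρtr : ρ.trace = 1) :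
    traceNorm (tensorExt F (fun X => Φ X - Ψ X) ρ) ≤ 2 := by
  rw [tensorExt_sub]
  calc _ ≤ (tensorExt F Φ ρ).trace.re + (tensorExt F Ψ ρ).trace.re :=
        traceNorm_sub_le (hΦ F ρ hρ) (hΨ F ρ hρ)
    _ = 2 := by rw [trace_tensorExt hΦtr, trace_tensorExt hΨtr, hρtr]; norm_num

end DiamondNorm

section SubsystemMeasurement

variable {D E : ℕ} [NeZero D]

lemma ketbra_posSemidef (j : ZMod D) : (ketbra j).PosSemidef := by
  rw [ketbra, ← diagonal_single]
  exact .diagonal fun k => by rw [Pi.single_apply]; split_ifs <;> norm_num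

lemma trace_ketbra (j : ZMod D) : (ketbra j).trace = 1 :=
  trace_single_eq_same j 1

lemma sum_kronecker_ketbra {n : Type*} (A : ZMod D → Matrix n n ℂ) :
    ∑ k, A k ⊗ₖ ketbra k = blockDiagonal A :=
  sum_kronecker_single A

lemma measProj_conjTranspose (j : ZMod D) : (measProj E j)ᴴ = measProj E j := by
  rw [measProj, conjTranspose_kronecker, conjTranspose_one, ketbra, conjTranspose_single, star_one]

lemma measProj_mul_kronecker_ketbra_mul (σ : Matrix (Fin E) (Fin E) ℂ) (j k : ZMod D) :
    measProj E k * (σ ⊗ₖ ketbra j) * measProj E k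
      = (Pi.single j (σ ⊗ₖ ketbra j) : ZMod D → Matrix _ _ ℂ) k := by
  rw [measProj, ← mul_kronecker_mul, ← mul_kronecker_mul, one_mul, mul_one, ketbra, ketbra]
  by_cases h : k = j
  · subst h
    rw [single_mul_single_same, single_mul_single_same, one_mul, one_mul, Pi.single_eq_same]
  · rw [single_mul_single_of_ne (h := h), zero_mul, kronecker_zero, Pi.single_eq_of_ne h]

lemma sum_measProj : ∑ j : ZMod D, measProj E j = 1 := by
  simp only [measProj, ketbra, sum_kronecker_single]
  exact blockDiagonal_one

lemma measProj_mul_self (j : ZMod D) : measProj E j * measProj E j = measProj E j := by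
  rw [measProj, ← mul_kronecker_mul, one_mul, ketbra, single_mul_single_same, one_mul]

lemma trace_subsysMeas (ρ : Matrix (Fin E × ZMod D) (Fin E × ZMod D) ℂ) :
    (subsysMeas E D ρ).trace = ρ.trace := by
  have hblock : ∀ j : ZMod D, ((measProj E j * ρ * measProj E j) ⊗ₖ ketbra j).trace
      = (measProj E j * ρ).trace := by
    intro j
    rw [trace_kronecker, trace_ketbra, mul_one, trace_mul_cycle, measProj_mul_self]
  rw [subsysMeas, trace_sum, Finset.sum_congr rfl fun j _ => hblock j, ← trace_sum,
    ← Finset.sum_mul, sum_measProj, one_mul]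

lemma isCompletelyPositive_subsysMeas : IsCompletelyPositive (subsysMeas E D) := by
  have h := IsCompletelyPositive.sum (Finset.univ : Finset (ZMod D)) fun j _ =>
    (IsCompletelyPositive.conj (measProj E j)).kronecker (ketbra_posSemidef j)
  simp only [measProj_conjTranspose] at h
  exact h

lemma subsysMeas_kronecker_ketbra (σ : Matrix (Fin E) (Fin E) ℂ) (j : ZMod D) :
    subsysMeas E D (σ ⊗ₖ ketbra j) = blockDiagonal (Pi.single j (σ ⊗ₖ ketbra j)) := by
  simp only [subsysMeas, measProj_mul_kronecker_ketbra_mul, sum_kronecker_ketbra]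

end SubsystemMeasurement

/-- For any implementation `Θ(M)(ρ) = Σ_j M_j(ρ) ⊗ |j⟩⟨j|` of the subsystem
measurement `M` (with `M_j` completely positive and `Σ_j M_j` trace preserving), for any density
matrix `σ` on `C^E` and any `j`, with `σ_j = σ ⊗ |j⟩⟨j|`, the diamond norm of
`Δ = Θ(M) − M` satisfies `‖Δ‖◇ ≥ 1 − tr M_j(σ_j) + ‖M_j(σ_j) − σ_j‖₁`. -/
theorem diamondNorm_implementation_lower_bound
    {D E : ℕ} [NeZero D]
    (Mj : ZMod D → Matrix (Fin E × ZMod D) (Fin E × ZMod D) ℂ →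
      Matrix (Fin E × ZMod D) (Fin E × ZMod D) ℂ)
    (hCP : ∀ j, ∃ (K : ℕ) (L : Fin K → Matrix (Fin E × ZMod D) (Fin E × ZMod D) ℂ),
      ∀ ρ, Mj j ρ = ∑ k, L k * ρ * (L k)ᴴ)
    (hTP : ∀ ρ : Matrix (Fin E × ZMod D) (Fin E × ZMod D) ℂ,
      (∑ j : ZMod D, Mj j ρ).trace = ρ.trace)
    (σ : Matrix (Fin E) (Fin E) ℂ) (hσ : σ.PosSemidef) (hσtr : σ.trace = 1) (j : ZMod D) :
    1 - (Mj j (σ ⊗ₖ ketbra j)).trace.re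
        + traceNorm (Mj j (σ ⊗ₖ ketbra j) - σ ⊗ₖ ketbra j)
      ≤ diamondNorm
          (fun ρ => (∑ k : ZMod D, (Mj k ρ) ⊗ₖ ketbra k) - subsysMeas E D ρ) := by
  choose K L hL using hCP
  have hMj : ∀ k, IsCompletelyPositive (Mj k) := fun k => .of_kraus (L k) (hL k)
  have hΘ : IsCompletelyPositive fun ρ => ∑ k : ZMod D, Mj k ρ ⊗ₖ ketbra k :=
    .sum _ fun k _ => (hMj k).kronecker (ketbra_posSemidef k)
  have hΘtr : ∀ ρ, (∑ k : ZMod D, Mj k ρ ⊗ₖ ketbra k).trace = ρ.trace := fun ρ => by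
    simp only [trace_sum, trace_kronecker, trace_ketbra, mul_one, ← hTP ρ]
  set σj := σ ⊗ₖ ketbra j
  have hσj : σj.PosSemidef := hσ.kronecker (ketbra_posSemidef j)
  have hσjtr : σj.trace = 1 := by rw [trace_kronecker, hσtr, trace_ketbra, one_mul]
  have hsum : ∑ k, (Mj k σj).trace.re = 1 := by
    rw [← Complex.re_sum, ← trace_sum, hTP, hσjtr, Complex.one_re]
  calc _ = traceNorm ((∑ k, Mj k σj ⊗ₖ ketbra k) - subsysMeas E D σj) := by
        rw [sum_kronecker_ketbra, subsysMeas_kronecker_ketbra, ← blockDiagonal_sub,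
          traceNorm_blockDiagonal_sub_single fun k => (hMj k).posSemidef hσj, hsum]
    _ ≤ _ := traceNorm_le_diamondNorm
        (fun _ _ hρ hρtr => traceNorm_tensorExt_sub_le_two hΘ hΘtr
          isCompletelyPositive_subsysMeas trace_subsysMeas hρ hρtr) hσj hσjtr
end

section
/- Let ρ and σ be d×d density matrices (positive semidefinite complex matrices with trace 1) and let π be a d×d orthogonal projection matrix (π = πᴴ = π²) such that π ρ = ρ. Then 1 − tr(π σ) ≤ (1/2)‖ρ − σ‖₁ ≤ √(1 − ‖√ρ √σ‖₁²). -/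
open scoped Kronecker ComplexOrder
open Matrix

/-!
Write `A = ρ - σ = A⁺ - A⁻`. As `tr A = 0`, `tr A⁺ = ‖A‖₁ / 2`, and for the projection `0 ≤ π ≤ 1`
one has `tr (π A) ≤ tr (π A⁺) ≤ tr A⁺`; since `π ρ = ρ`, `tr (π A) = 1 - tr (π σ)`.

For the upper bound, polar decomposition gives a unitary `U` with `tr (√ρ √σ U) = ‖√ρ √σ‖₁ =: t`.
For `X = √ρ` and `Y = √σ U` we have `X Xᴴ = ρ`, `Y Yᴴ = σ` and `Re tr (X Yᴴ) = t`, and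
`ρ - σ = (G Hᴴ + H Gᴴ) / 2` with `G = X - Y`, `H = X + Y`. With `C = sign (ρ - σ)`, Cauchy–Schwarz
for the Hilbert–Schmidt inner product gives
`‖ρ - σ‖₁ = Re tr (C G Hᴴ) ≤ ‖C G‖₂ ‖H‖₂ ≤ ‖G‖₂ ‖H‖₂ = √((2 - 2t) (2 + 2t))`.
-/

open scoped MatrixOrder

namespace Matrix

variable {n : Type*} [Fintype n] [DecidableEq n]

theorem psdSqrt_eq_sqrt {A : Matrix n n ℂ} (hA : A.PosSemidef) : psdSqrt A = CFC.sqrt A := by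
  rw [psdSqrt, dif_pos hA, CFC.sqrt_eq_real_sqrt A hA.nonneg, cfcₙ_eq_cfc, hA.1.cfc_eq,
    IsHermitian.cfc, Unitary.conjStarAlgAut_apply]
  rfl

theorem psdSqrt_mul_conjTranspose_self {A : Matrix n n ℂ} (hA : A.PosSemidef) :
    psdSqrt A * (psdSqrt A)ᴴ = A := by
  rw [psdSqrt_eq_sqrt hA, ← star_eq_conjTranspose, (CFC.sqrt_nonneg A).isSelfAdjoint.star_eq,
    CFC.sqrt_mul_sqrt_self A hA.nonneg]

theorem conjTranspose_psdSqrt {A : Matrix n n ℂ} (hA : A.PosSemidef) :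
    (psdSqrt A)ᴴ = psdSqrt A := by
  rw [psdSqrt_eq_sqrt hA, ← star_eq_conjTranspose, (CFC.sqrt_nonneg A).isSelfAdjoint.star_eq]

theorem traceNorm_eq_re_trace_abs_conjTranspose (A : Matrix n n ℂ) :
    traceNorm A = (CFC.abs Aᴴ).trace.re := by
  rw [traceNorm, psdSqrt_eq_sqrt (posSemidef_self_mul_conjTranspose A), CFC.abs,
    star_eq_conjTranspose, conjTranspose_conjTranspose]

theorem trace_mul_nonneg {P Q : Matrix n n ℂ} (hP : 0 ≤ P) (hQ : 0 ≤ Q) : 0 ≤ (P * Q).trace := by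
  obtain ⟨B, rfl⟩ := CStarAlgebra.nonneg_iff_eq_star_mul_self.mp hQ
  rw [← mul_assoc, trace_mul_cycle]
  exact (star_right_conjugate_nonneg hP B).posSemidef.trace_nonneg

omit [DecidableEq n] in
theorem re_trace_conjTranspose (A : Matrix n n ℂ) : Aᴴ.trace.re = A.trace.re := by
  rw [trace_conjTranspose, Complex.star_def, Complex.conj_re]

theorem re_trace_mul_le_re_trace_posPart {Q A : Matrix n n ℂ} (hQ₀ : 0 ≤ Q) (hQ₁ : Q ≤ 1)
    (hA : A.IsHermitian) : (Q * A).trace.re ≤ (A⁺).trace.re := by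
  have hpos : 0 ≤ ((1 - Q) * A⁺).trace.re :=
    (Complex.nonneg_iff.mp (trace_mul_nonneg (sub_nonneg.mpr hQ₁) (CFC.posPart_nonneg A))).1
  have hneg : 0 ≤ (Q * A⁻).trace.re :=
    (Complex.nonneg_iff.mp (trace_mul_nonneg hQ₀ (CFC.negPart_nonneg A))).1
  have hsplit : Q * A = A⁺ - (1 - Q) * A⁺ - Q * A⁻ := by
    conv_lhs => rw [← CFC.posPart_sub_negPart A hA.isSelfAdjoint]
    noncomm_ring
  rw [hsplit, trace_sub, trace_sub, Complex.sub_re, Complex.sub_re]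
  linarith

theorem two_mul_re_trace_posPart {A : Matrix n n ℂ} (hA : A.IsHermitian) :
    2 * (A⁺).trace.re = traceNorm A + A.trace.re := by
  have hsub := congrArg (fun M => M.trace.re) (CFC.posPart_sub_negPart A hA.isSelfAdjoint)
  have hadd := congrArg (fun M => M.trace.re) (CFC.posPart_add_negPart A hA.isSelfAdjoint)
  simp only [trace_sub, trace_add, Complex.sub_re, Complex.add_re] at hsub hadd
  rw [traceNorm_eq_re_trace_abs_conjTranspose, hA.eq]
  linarith

theorem exists_isHermitian_mul_self_le_one_traceNorm_eq {A : Matrix n n ℂ} (hA : A.IsHermitian) :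
    ∃ C : Matrix n n ℂ, C.IsHermitian ∧ C * C ≤ 1 ∧ traceNorm A = (C * A).trace.re := by
  set s : ℝ → ℝ := fun x => SignType.sign x
  have hs : ContinuousOn s (spectrum ℝ A) := A.finite_real_spectrum.continuousOn _
  refine ⟨cfc s A, (cfc_predicate s A).isHermitian, ?_, ?_⟩
  · rw [← cfc_mul s s A]
    refine cfc_le_one _ A fun x _ => ?_
    show (SignType.sign x : ℝ) * SignType.sign x ≤ 1
    generalize SignType.sign x = t
    cases t <;> simp
  · rw [traceNorm_eq_re_trace_abs_conjTranspose, hA.eq, CFC.abs_eq_cfc_norm A hA.isSelfAdjoint]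
    have hsA : cfc s A * A = cfc (fun x => s x * x) A := by
      rw [cfc_mul s (fun x => x) A, cfc_id' ℝ A]
    rw [hsA, cfc_congr (f := fun x : ℝ => ‖x‖) (g := fun x => s x * x) fun x _ =>
      (sign_mul_self x).symm]

theorem re_trace_mul_conjTranspose_sq_le (B H : Matrix n n ℂ) :
    (B * Hᴴ).trace.re ^ 2 ≤ (B * Bᴴ).trace.re * (H * Hᴴ).trace.re := by
  -- the Hilbert–Schmidt inner product `⟪B, H⟫ = tr (H Bᴴ)` is the one induced by the matrix `1`
  let _ := toMatrixSeminormedAddCommGroup (1 : Matrix n n ℂ) PosSemidef.one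
  let _ := toMatrixInnerProductSpace (1 : Matrix n n ℂ) PosSemidef.one
  have h := inner_mul_inner_self_le (𝕜 := ℂ) H B
  change ‖(B * 1 * Hᴴ).trace‖ * ‖(H * 1 * Bᴴ).trace‖ ≤
    (H * 1 * Hᴴ).trace.re * (B * 1 * Bᴴ).trace.re at h
  rw [show H * 1 * Bᴴ = (B * 1 * Hᴴ)ᴴ by simp, trace_conjTranspose] at h
  simp only [mul_one, RCLike.star_def, Complex.norm_conj] at h
  calc (B * Hᴴ).trace.re ^ 2 = |(B * Hᴴ).trace.re| ^ 2 := (sq_abs _).symm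
    _ ≤ ‖(B * Hᴴ).trace‖ ^ 2 := by gcongr; exact Complex.abs_re_le_norm _
    _ ≤ _ := by rw [sq, mul_comm (B * Bᴴ).trace.re]; exact h

theorem re_trace_mul_conjTranspose_le_of_conjTranspose_mul_le_one {C : Matrix n n ℂ}
    (hC : Cᴴ * C ≤ 1) (G : Matrix n n ℂ) : (C * G * (C * G)ᴴ).trace.re ≤ (G * Gᴴ).trace.re := by
  have h := (Complex.nonneg_iff.mp
    (trace_mul_nonneg (sub_nonneg.mpr hC) (mul_star_self_nonneg G))).1
  rw [star_eq_conjTranspose, sub_mul, one_mul, trace_sub, Complex.sub_re] at h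
  have hcycle : (C * G * (C * G)ᴴ).trace = (Cᴴ * C * (G * Gᴴ)).trace := by
    rw [conjTranspose_mul, ← mul_assoc, trace_mul_comm]
    simp only [mul_assoc]
  rw [hcycle]
  linarith

theorem traceNorm_mul_conjTranspose_sub_sq_le (X Y : Matrix n n ℂ) :
    traceNorm (X * Xᴴ - Y * Yᴴ) ^ 2 ≤
      ((X * Xᴴ).trace.re + (Y * Yᴴ).trace.re) ^ 2 - 4 * (X * Yᴴ).trace.re ^ 2 := by
  obtain ⟨C, hC, hC₁, hCA⟩ := exists_isHermitian_mul_self_le_one_traceNorm_eq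
    ((isHermitian_mul_conjTranspose_self X).sub (isHermitian_mul_conjTranspose_self Y))
  set G := X - Y
  set H := X + Y
  have hYX : (Y * Xᴴ).trace.re = (X * Yᴴ).trace.re := by
    rw [← re_trace_conjTranspose, conjTranspose_mul, conjTranspose_conjTranspose]
  have hGH : X * Xᴴ - Y * Yᴴ = (2 : ℂ)⁻¹ • (G * Hᴴ + (G * Hᴴ)ᴴ) := by
    simp only [G, H, conjTranspose_mul, conjTranspose_conjTranspose, conjTranspose_add,
      conjTranspose_sub]
    rw [show (X - Y) * (Xᴴ + Yᴴ) + (X + Y) * (Xᴴ - Yᴴ) = (2 : ℂ) • (X * Xᴴ - Y * Yᴴ) by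
      rw [two_smul]; noncomm_ring, smul_smul, inv_mul_cancel₀ two_ne_zero, one_smul]
  have hkey : traceNorm (X * Xᴴ - Y * Yᴴ) = (C * G * Hᴴ).trace.re := by
    have hadj : (C * (G * Hᴴ)ᴴ).trace.re = (C * G * Hᴴ).trace.re := by
      rw [← re_trace_conjTranspose, conjTranspose_mul, conjTranspose_conjTranspose, hC.eq,
        trace_mul_comm, mul_assoc]
    rw [hCA, hGH, mul_smul_comm, trace_smul, mul_add, trace_add]
    simp only [smul_eq_mul, Complex.mul_re, Complex.add_re, hadj, ← mul_assoc]
    norm_num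
    ring
  have hG : (G * Gᴴ).trace.re =
      (X * Xᴴ).trace.re + (Y * Yᴴ).trace.re - 2 * (X * Yᴴ).trace.re := by
    simp only [G, conjTranspose_sub, sub_mul, mul_sub, trace_sub, Complex.sub_re, hYX]
    ring
  have hH : (H * Hᴴ).trace.re =
      (X * Xᴴ).trace.re + (Y * Yᴴ).trace.re + 2 * (X * Yᴴ).trace.re := by
    simp only [H, conjTranspose_add, add_mul, mul_add, trace_add, Complex.add_re, hYX]
    ring
  have hH₀ : 0 ≤ (H * Hᴴ).trace.re :=
    (Complex.nonneg_iff.mp (posSemidef_self_mul_conjTranspose H).trace_nonneg).1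
  calc traceNorm (X * Xᴴ - Y * Yᴴ) ^ 2 = (C * G * Hᴴ).trace.re ^ 2 := by rw [hkey]
    _ ≤ (C * G * (C * G)ᴴ).trace.re * (H * Hᴴ).trace.re := re_trace_mul_conjTranspose_sq_le _ _
    _ ≤ (G * Gᴴ).trace.re * (H * Hᴴ).trace.re := by
      refine mul_le_mul_of_nonneg_right
        (re_trace_mul_conjTranspose_le_of_conjTranspose_mul_le_one ?_ G) hH₀
      rwa [hC.eq]
    _ = _ := by rw [hG, hH]; ring

theorem exists_mem_unitaryGroup_eq_mul_diagonal_sqrt {W : Matrix n n ℂ} {d : n → ℝ}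
    (hd : ∀ i, 0 ≤ d i) (hW : Wᴴ * W = diagonal fun i => (d i : ℂ)) :
    ∃ B ∈ unitaryGroup n ℂ, W = B * diagonal fun i => (√(d i) : ℂ) := by
  -- the columns `w j` of `W` are orthogonal with `‖w j‖² = d j`: normalise the nonzero ones and
  -- extend them to an orthonormal basis
  set w : n → EuclideanSpace ℂ n := fun j => WithLp.toLp 2 fun k => W k j
  have hinner (i j : n) : inner ℂ (w i) (w j) = if i = j then (d i : ℂ) else 0 := by
    rw [EuclideanSpace.inner_toLp_toLp, dotProduct]
    simpa [mul_apply, mul_comm, diagonal_apply] using congrFun (congrFun hW i) j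
  set v : n → EuclideanSpace ℂ n := fun j => ((√(d j) : ℂ))⁻¹ • w j
  have hv : Orthonormal ℂ ({j | d j ≠ 0}.domRestrict v) := by
    rw [orthonormal_iff_ite]
    rintro ⟨i, hi⟩ ⟨j, hj⟩
    simp only [Set.domRestrict_apply, v, inner_smul_left, inner_smul_right, hinner,
      Subtype.mk.injEq]
    split_ifs with h
    · subst h
      have hsqrt : (√(d i) : ℂ) ≠ 0 := by
        exact_mod_cast (Real.sqrt_pos.mpr ((hd i).lt_of_ne' hi)).ne'
      rw [map_inv₀, Complex.conj_ofReal]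
      field_simp
      exact_mod_cast (Real.sq_sqrt (hd i)).symm
    · simp
  obtain ⟨b, hb⟩ := hv.exists_orthonormalBasis_extension_of_card_eq (by simp)
  refine ⟨(EuclideanSpace.basisFun n ℂ).toBasis.toMatrix b,
    (EuclideanSpace.basisFun n ℂ).toMatrix_orthonormalBasis_mem_unitary b, ?_⟩
  ext k j
  rw [mul_diagonal, Module.Basis.toMatrix_apply]
  simp only [EuclideanSpace.basisFun_toBasis, PiLp.basisFun_repr]
  by_cases hj : d j = 0
  · have hw : w j = 0 :=
      inner_self_eq_zero.mp (by rw [hinner, if_pos rfl, hj, Complex.ofReal_zero])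
    simpa [hj, w] using congrArg (fun x => x k) hw
  · have hsqrt : (√(d j) : ℂ) ≠ 0 := by
      exact_mod_cast (Real.sqrt_pos.mpr ((hd j).lt_of_ne' hj)).ne'
    rw [hb j hj]
    simp only [v, w, WithLp.ofLp_smul, Pi.smul_apply, smul_eq_mul]
    field_simp

theorem exists_mem_unitaryGroup_mul_eq_psdSqrt (M : Matrix n n ℂ) :
    ∃ U ∈ unitaryGroup n ℂ, M * U = psdSqrt (M * Mᴴ) := by
  have hMM := posSemidef_self_mul_conjTranspose M
  set V : Matrix n n ℂ := (hMM.1.eigenvectorUnitary : Matrix n n ℂ)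
  set S : Matrix n n ℂ := diagonal fun i => (√(hMM.1.eigenvalues i) : ℂ)
  have hVV : V * star V = 1 := Unitary.coe_mul_star_self _
  have hdiag : (Mᴴ * V)ᴴ * (Mᴴ * V) = diagonal fun i => (hMM.1.eigenvalues i : ℂ) := by
    have h := hMM.1.conjStarAlgAut_star_eigenvectorUnitary
    rw [Unitary.conjStarAlgAut_apply, Unitary.coe_star, star_star] at h
    rw [conjTranspose_mul, conjTranspose_conjTranspose, ← star_eq_conjTranspose, mul_assoc]
    simp only [mul_assoc] at h
    exact h
  obtain ⟨B, hB, hW⟩ :=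
    exists_mem_unitaryGroup_eq_mul_diagonal_sqrt hMM.eigenvalues_nonneg hdiag
  have hBB : star B * B = 1 := (mem_unitaryGroup_iff').mp hB
  have hM : M = V * S * star B := by
    have hMH : Mᴴ = B * S * star V := by rw [← hW, mul_assoc, hVV, mul_one]
    rw [← conjTranspose_conjTranspose M, hMH]
    simp [S, conjTranspose_mul, diagonal_conjTranspose, star_eq_conjTranspose, mul_assoc,
      Pi.star_def]
  refine ⟨B * star V, Submonoid.mul_mem _ hB (Unitary.star_mem hMM.1.eigenvectorUnitary.2), ?_⟩
  calc M * (B * star V) = V * S * star V := by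
        rw [hM, mul_assoc, ← mul_assoc (star B), hBB, one_mul]
    _ = psdSqrt (M * Mᴴ) := by rw [psdSqrt, dif_pos hMM]; rfl

end Matrix

/-- (Improved Fuchs–van de Graaf inequality.) For density matrices `ρ, σ` and
any orthogonal projection `π` with `π ρ = ρ`,
`1 − tr(π σ) ≤ (1/2)‖ρ − σ‖₁ ≤ √(1 − ‖√ρ √σ‖₁²)`. -/
theorem fuchs_van_de_graaf_improved {d : ℕ} (ρ σ π : Matrix (Fin d) (Fin d) ℂ)
    (hρ : ρ.PosSemidef) (hρtr : ρ.trace = 1)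
    (hσ : σ.PosSemidef) (hσtr : σ.trace = 1)
    (hπH : πᴴ = π) (hπproj : π * π = π) (hπρ : π * ρ = ρ) :
    1 - (π * σ).trace.re ≤ (1 / 2 : ℝ) * traceNorm (ρ - σ)
      ∧ (1 / 2 : ℝ) * traceNorm (ρ - σ)
        ≤ Real.sqrt (1 - traceNorm (psdSqrt ρ * psdSqrt σ) ^ 2) := by
  have hA : (ρ - σ).IsHermitian := hρ.1.sub hσ.1
  constructor
  · have hπ : IsStarProjection π := ⟨hπproj, hπH⟩
    have htr : (ρ - σ).trace.re = 0 := by simp [trace_sub, hρtr, hσtr]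
    calc 1 - (π * σ).trace.re = (π * (ρ - σ)).trace.re := by
          rw [mul_sub, hπρ, trace_sub, Complex.sub_re, hρtr, Complex.one_re]
      _ ≤ ((ρ - σ)⁺).trace.re := re_trace_mul_le_re_trace_posPart hπ.nonneg hπ.le_one hA
      _ = 1 / 2 * traceNorm (ρ - σ) := by linarith [two_mul_re_trace_posPart hA]
  · set X := psdSqrt ρ
    set Z := psdSqrt σ
    obtain ⟨U, hU, hXZU⟩ := exists_mem_unitaryGroup_mul_eq_psdSqrt (X * Z)
    have hY : Z * U * (Z * U)ᴴ = σ := by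
      rw [conjTranspose_mul, mul_assoc, ← mul_assoc U, ← star_eq_conjTranspose U,
        (mem_unitaryGroup_iff).mp hU, one_mul, psdSqrt_mul_conjTranspose_self hσ]
    have hfid : (X * (Z * U)ᴴ).trace.re = traceNorm (X * Z) := by
      rw [← re_trace_conjTranspose, conjTranspose_mul, conjTranspose_conjTranspose,
        conjTranspose_psdSqrt hρ, trace_mul_cycle]
      change (X * Z * U).trace.re = _
      rw [hXZU, traceNorm]
    have h := traceNorm_mul_conjTranspose_sub_sq_le X (Z * U)
    rw [psdSqrt_mul_conjTranspose_self hρ, hY, hρtr, hσtr, hfid] at h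
    refine (le_abs_self _).trans (Real.abs_le_sqrt ?_)
    rw [mul_pow]
    norm_num at h
    linarith
end
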